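/- Let α ≥ 3 be a cardinal, let θ be an infinite cardinal, and let λ be a cardinal with cf(2^θ) ≤ λ < 2^θ and θ < λ. Then there is no universal K_α-free graph of cardinality λ; that is, there is no K_α-free graph G of cardinality λ such that every K_α-free graph of cardinality λ embeds as an induced subgraph into G. -/

import Mathlib

/-
Enumerate the `2 ^ θ` maps `f : θ → V` in order type `(2 ^ θ).ord`. Fewer than `2 ^ θ` maps occur
below any stage `t`, and each cuts out at most `λ < 2 ^ θ` subsets `f⁻¹(N(v))` of `θ`, so some
`A_t ⊆ θ` is cut out by no map up to stage `t`. Along a cofinal set of `cf(2 ^ θ) ≤ λ` stages, the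
bipartite incidence graph of `θ` and the sets `A_t` is triangle-free with `λ` vertices. An embedding
into `G` would restrict on `θ` to a map cutting out every `A_t`, also for `t` beyond its own stage.
-/

universe u

open Cardinal

/-- `G` is `K_α`-free: there is no injective map from a type of cardinality `α` into
the vertices of `G` whose images are pairwise adjacent. -/
def KCliqueFree (α : Cardinal.{u}) {V : Type u} (G : SimpleGraph V) : Prop :=
  ¬ ∃ (ι : Type u) (f : ι → V), #ι = α ∧ Function.Injective f ∧
      ∀ i j : ι, i ≠ j → G.Adj (f i) (f j)

namespace Cardinal

open Ordinal

theorem power_eq_two_power_of_le_two_power {θ κ : Cardinal} (hθ : ℵ₀ ≤ θ) (h2 : 2 ≤ κ)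
    (hκ : κ ≤ 2 ^ θ) : κ ^ θ = 2 ^ θ := by
  refine le_antisymm ?_ (power_le_power_right h2)
  calc κ ^ θ ≤ (2 ^ θ) ^ θ := power_le_power_right hκ
    _ = 2 ^ θ := by rw [← power_mul, mul_eq_self hθ]

theorem exists_cofinal_family_notMem {α Y : Type u} [LinearOrder α] [WellFoundedLT α]
    (hα : ℵ₀ ≤ #α) (h : (#α).ord = typeLT α) (hY : #α ≤ #Y) (T : α → Set Y) {κ : Cardinal}
    (hκ : κ < #α) (hT : ∀ a, #(T a) ≤ κ) :
    ∃ (s : Set α) (A : s → Y), #s = Order.cof α ∧ ∀ a, ∃ i, A i ∉ T a := by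
  have hsmall : ∀ a, #(⋃ b ∈ Set.Iic a, T b) < #Y := fun a =>
    calc #(⋃ b ∈ Set.Iic a, T b) ≤ #(Set.Iic a) * ⨆ b : Set.Iic a, #(T b) := mk_biUnion_le _ _
      _ ≤ #(Set.Iic a) * κ := by gcongr; exact ciSup_le' fun b => hT b
      _ < #α := mul_lt_of_lt hα (mk_Iic_lt a h hα) hκ
      _ ≤ #Y := hY
  choose A hA using fun a => compl_nonempty_of_mk_lt_mk (hsmall a)
  obtain ⟨s, hs, hcard⟩ := Order.exists_cof_eq α
  refine ⟨s, fun i => A i, hcard, fun a => ?_⟩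
  obtain ⟨b, hb, hab⟩ := hs a
  exact ⟨⟨b, hb⟩, fun hmem => hA b (Set.mem_biUnion hab hmem)⟩

theorem exists_family_card_eq_cof_notMem {F Y : Type u} (hF : ℵ₀ ≤ #F) (hY : #F ≤ #Y)
    (T : F → Set Y) {κ : Cardinal} (hκ : κ < #F) (hT : ∀ f, #(T f) ≤ κ) :
    ∃ (ι : Type u) (A : ι → Y), #ι = (#F).ord.cof ∧ ∀ f, ∃ i, A i ∉ T f := by
  obtain ⟨e⟩ : Nonempty (F ≃ (#F).ord.ToType) := Cardinal.eq.1 (mk_ord_toType _).symm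
  have hcard : #(#F).ord.ToType = #F := mk_ord_toType _
  obtain ⟨s, A, hs, hA⟩ := exists_cofinal_family_notMem (hcard.symm ▸ hF) (by simp)
    (hcard.symm ▸ hY) (T ∘ e.symm) (hcard.symm ▸ hκ) fun _ => hT _
  exact ⟨s, A, hs.trans (Ordinal.cof_toType _), fun f => by simpa using hA (e f)⟩

end Cardinal

namespace SimpleGraph

variable {V : Type u} {G : SimpleGraph V}

theorem CliqueFree.kCliqueFree {n : ℕ} (hG : G.CliqueFree n) {α : Cardinal.{u}}
    (hα : n ≤ α) : KCliqueFree α G := by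
  rintro ⟨ι, f, rfl, hf, hadj⟩
  obtain ⟨g⟩ : Nonempty (Fin n ↪ ι) := lift_mk_le'.1 (by simpa using hα)
  exact (cliqueFree_iff.1 hG).false ⟨⟨f ∘ g, fun hne => hadj _ _ (g.injective.ne hne)⟩,
    hf.comp g.injective⟩

variable {X ι : Type*}

def incidenceGraph (A : ι → Set X) : SimpleGraph (X ⊕ ι) where
  Adj
    | .inl x, .inr i => x ∈ A i
    | .inr i, .inl x => x ∈ A i
    | _, _ => False
  symm := ⟨by rintro (x | i) (y | j) h <;> exact h⟩
  loopless := ⟨by rintro (x | i) h <;> exact h⟩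

@[simp]
theorem incidenceGraph_adj_inl_inr (A : ι → Set X) (x : X) (i : ι) :
    (incidenceGraph A).Adj (.inl x) (.inr i) ↔ x ∈ A i := Iff.rfl

theorem incidenceGraph_colorable_two (A : ι → Set X) : (incidenceGraph A).Colorable 2 :=
  (Coloring.mk (fun v : X ⊕ ι => v.isLeft) fun {u v} h => by
    rcases u with x | i <;> rcases v with y | j <;> simp_all [incidenceGraph]).colorable

def neighborTraces (G : SimpleGraph V) (f : X → V) : Set (Set X) :=
  Set.range fun v => f ⁻¹' G.neighborSet v

theorem isEmpty_incidenceGraph_embedding {A : ι → Set X}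
    (hA : ∀ f : X → V, ∃ i, A i ∉ G.neighborTraces f) : IsEmpty (incidenceGraph A ↪g G) := by
  refine ⟨fun e => ?_⟩
  obtain ⟨i, hi⟩ := hA (e ∘ .inl)
  refine hi ⟨e (.inr i), Set.ext fun x => ?_⟩
  simp [G.adj_comm]

end SimpleGraph

/-- For a cardinal `α ≥ 3`, an infinite `θ`, and `λ` with `cf(2^θ) ≤ λ < 2^θ` and
`θ < λ`, there is no universal `K_α`-free graph of cardinality `λ`. -/
theorem stmt8 (α θ lam : Cardinal.{u}) (hα : 3 ≤ α) (hθ : ℵ₀ ≤ θ)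
    (hcf : ((2 : Cardinal.{u}) ^ θ).ord.cof ≤ lam) (hlt : lam < 2 ^ θ) (hθlam : θ < lam) :
    ¬ ∃ (V : Type u) (G : SimpleGraph V), #V = lam ∧ KCliqueFree α G ∧
        ∀ (W : Type u) (H : SimpleGraph W), #W = lam → KCliqueFree α H →
          Nonempty (H ↪g G) := by
  rintro ⟨V, G, hV, -, huniv⟩
  have hlam : ℵ₀ ≤ lam := hθ.trans hθlam.le
  have hF : #(θ.out → V) = 2 ^ θ := by
    rw [← power_def, hV, mk_out]
    exact power_eq_two_power_of_le_two_power hθ (natCast_le_aleph0.trans hlam) hlt.le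
  obtain ⟨ι, A, hι, hA⟩ := exists_family_card_eq_cof_notMem (hF ▸ hθ.trans (cantor θ).le)
    (by rw [hF, mk_set, mk_out]) G.neighborTraces (hF ▸ hlt) fun _ => mk_range_le.trans_eq hV
  -- `lam.out` adds isolated vertices, bringing the vertex count up to exactly `lam`
  let B : ι ⊕ lam.out → Set θ.out := Sum.elim A fun _ => ∅
  have hcard : #(θ.out ⊕ (ι ⊕ lam.out)) = lam := by
    rw [hF] at hι
    simp only [mk_sum, mk_out, lift_id]
    rw [add_eq_right hlam (hι.trans_le hcf), add_eq_right hlam hθlam.le]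
  have hfree : KCliqueFree α (SimpleGraph.incidenceGraph B) :=
    ((SimpleGraph.incidenceGraph_colorable_two B).cliqueFree (by norm_num : 2 < 3)).kCliqueFree
      (by simpa using hα)
  obtain ⟨e⟩ := huniv _ _ hcard hfree
  refine (SimpleGraph.isEmpty_incidenceGraph_embedding fun f => ?_).false e
  obtain ⟨i, hi⟩ := hA f
  exact ⟨.inl i, hi⟩
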